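/- Let L/K be a finite Galois extension of fields. Then the tame locus, namely the set of all O ∈ Val(L) such that either the residue field κ(O) has characteristic 0, or char κ(O) = p > 0 and p does not divide the order of the inertia subgroup I_O ≤ Gal(L/K), is an open subset of Val(L) in the Zariski topology. -/

import Mathlib

universe u

/-- The Zariski topology on the space `Val(L)` of all valuation subrings of a field `L`:
it is generated by the subbasic open sets `U_x = {O : x ∈ O}` for `x ∈ L`. -/
def zariskiTopology (L : Type u) [Field L] : TopologicalSpace (ValuationSubring L) :=
  TopologicalSpace.generateFrom
    {U | ∃ x : L, U = {O : ValuationSubring L | x ∈ O}}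

/-- The inertia subgroup of `Gal(L/K)` at a valuation subring `O` of `L`: the set of those
`g` with `g(O) = O` inducing the identity automorphism on the residue field `κ(O)`, i.e.
such that for every `x ∈ O` the element `g x - x` lies in the maximal ideal of `O` (it
belongs to `O` and is not a unit of `O`). -/
def inertiaSet (K : Type u) {L : Type u} [Field K] [Field L] [Algebra K L]
    (O : ValuationSubring L) : Set (L ≃ₐ[K] L) :=
  {g | (∀ x : L, x ∈ O ↔ g x ∈ O) ∧
    ∀ x ∈ O, ∀ z ∈ O, (g x - x) * z ≠ 1}

/-! In a valuation ring `O` the maximal ideal is `{y | y = 0 ∨ y⁻¹ ∉ O}`, so for fixed `y` the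
condition `y ∈ 𝔪_O` on `O ∈ Val(L)` is Zariski closed. An automorphism `g` lies in `I_O` as soon as
`g x - x ∈ 𝔪_O` for all `x ∈ O` (that `g` preserves `O` follows by applying this to `x⁻¹` for
`x ∉ O`), so `{O | g ∈ I_O}` is the intersection of the closed sets
`{O | x ∉ O} ∪ {O | g x - x ∈ 𝔪_O}`. By Cauchy and Lagrange, `O` is outside the tame locus iff some
`g ∈ I_O` of prime order `p` has `p ∈ 𝔪_O`, i.e. `char κ(O) = p`; so the complement of the tame
locus is a finite union of closed sets. -/

attribute [local instance] zariskiTopology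

namespace ValuationSubring

variable {L : Type u} [Field L]

theorem mem_nonunits_iff_forall_mul_ne_one {O : ValuationSubring L} {y : L} :
    y ∈ O.nonunits ↔ y ∈ O ∧ ∀ z ∈ O, y * z ≠ 1 := by
  refine ⟨fun hy => ⟨O.nonunits_subset hy, fun z hz hyz => ?_⟩, fun ⟨_, hy⟩ => ?_⟩
  · rcases O.mem_nonunits_iff_or.1 hy with rfl | hinv
    · simp at hyz
    · exact hinv (eq_inv_of_mul_eq_one_right hyz ▸ hz)
  · rw [O.mem_nonunits_iff_or, or_iff_not_imp_left]
    exact fun hy0 hinv => hy _ hinv (mul_inv_cancel₀ hy0)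

theorem ringChar_residueField_eq_iff (O : ValuationSubring L) {p : ℕ} (hp : p.Prime) :
    ringChar (IsLocalRing.ResidueField O) = p ↔ (p : L) ∈ O.nonunits := by
  rw [ringChar.eq_iff, CharP.charP_iff_prime_eq_zero hp, ← map_natCast (IsLocalRing.residue O),
    IsLocalRing.residue_eq_zero_iff, ← coe_mem_nonunits_iff, SubringClass.coe_natCast]

theorem isOpen_setOf_mem (x : L) : IsOpen {O : ValuationSubring L | x ∈ O} :=
  TopologicalSpace.GenerateOpen.basic _ ⟨x, rfl⟩

theorem isClosed_setOf_mem_nonunits (y : L) :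
    IsClosed {O : ValuationSubring L | y ∈ O.nonunits} := by
  simp only [mem_nonunits_iff_or, Set.ofPred_or]
  exact isClosed_const.union (isOpen_setOf_mem y⁻¹).isClosed_compl

end ValuationSubring

section Inertia

variable {K L : Type u} [Field K] [Field L] [Algebra K L]

theorem mem_inertiaSet_iff {O : ValuationSubring L} {g : L ≃ₐ[K] L} :
    g ∈ inertiaSet K O ↔ ∀ x ∈ O, g x - x ∈ O.nonunits := by
  refine ⟨fun ⟨hgO, hg⟩ x hx => ValuationSubring.mem_nonunits_iff_forall_mul_ne_one.2
    ⟨sub_mem ((hgO x).1 hx) hx, hg x hx⟩, fun hg => ?_⟩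
  have map_mem : ∀ x ∈ O, g x ∈ O := fun x hx => by
    simpa using add_mem (O.nonunits_subset (hg x hx)) hx
  refine ⟨fun x => ⟨map_mem x, fun hgx => ?_⟩,
    fun x hx => (ValuationSubring.mem_nonunits_iff_forall_mul_ne_one.1 (hg x hx)).2⟩
  by_contra hx
  have hinv : x⁻¹ ∈ O.nonunits := O.inv_mem_nonunits_iff.2 (Or.inr hx)
  have hginv : (g x)⁻¹ ∈ O.nonunits := by
    simpa [map_inv₀] using add_mem (hg _ (O.nonunits_subset hinv)) hinv
  rcases O.inv_mem_nonunits_iff.1 hginv with hgx0 | hgx'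
  · exact hx ((map_eq_zero_iff g g.injective).1 hgx0 ▸ O.zero_mem)
  · exact hgx' hgx

theorem isClosed_setOf_mem_inertiaSet (g : L ≃ₐ[K] L) :
    IsClosed {O : ValuationSubring L | g ∈ inertiaSet K O} := by
  have : {O : ValuationSubring L | g ∈ inertiaSet K O} =
      ⋂ x, {O | x ∈ O}ᶜ ∪ {O | g x - x ∈ O.nonunits} := by
    ext O
    simp [mem_inertiaSet_iff, imp_iff_not_or]
  rw [this]
  exact isClosed_iInter fun x =>
    (ValuationSubring.isOpen_setOf_mem x).isClosed_compl.union
      (ValuationSubring.isClosed_setOf_mem_nonunits _)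

variable (K) in
def inertiaSubgroup (O : ValuationSubring L) : Subgroup (L ≃ₐ[K] L) where
  carrier := inertiaSet K O
  one_mem' := mem_inertiaSet_iff.2 fun x _ => by simp
  mul_mem' {g h} hg hh := mem_inertiaSet_iff.2 fun x hx => by
    simpa using add_mem (mem_inertiaSet_iff.1 hg (h x) ((hh.1 x).1 hx))
      (mem_inertiaSet_iff.1 hh x hx)
  inv_mem' {g} hg := mem_inertiaSet_iff.2 fun x hx => by
    have hy : g⁻¹ x ∈ O := (hg.1 _).2 (by simpa)
    simpa using neg_mem (mem_inertiaSet_iff.1 hg _ hy)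

end Inertia

theorem Subgroup.prime_dvd_natCard_iff_exists_orderOf_eq {G : Type*} [Group G] (H : Subgroup G)
    [Finite H] {p : ℕ} (hp : p.Prime) : p ∣ Nat.card H ↔ ∃ g ∈ H, orderOf g = p := by
  have := Fact.mk hp
  constructor
  · intro hdvd
    obtain ⟨g, hg⟩ := exists_prime_orderOf_dvd_card' p hdvd
    exact ⟨g, g.2, by rwa [Subgroup.orderOf_coe]⟩
  · rintro ⟨g, hg, rfl⟩
    exact H.orderOf_dvd_natCard hg

theorem exists_prime_dvd_card_inertiaSet_iff {K L : Type u} [Field K] [Field L] [Algebra K L]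
    [Finite (L ≃ₐ[K] L)] {O : ValuationSubring L} :
    (∃ p : ℕ, p.Prime ∧ ringChar (IsLocalRing.ResidueField O) = p ∧
      p ∣ Nat.card (inertiaSet K O)) ↔
      ∃ g ∈ inertiaSet K O, (orderOf g).Prime ∧ (orderOf g : L) ∈ O.nonunits := by
  constructor
  · rintro ⟨p, hp, hchar, hdvd⟩
    obtain ⟨g, hg, rfl⟩ :=
      ((inertiaSubgroup K O).prime_dvd_natCard_iff_exists_orderOf_eq hp).1 hdvd
    exact ⟨g, hg, hp, (O.ringChar_residueField_eq_iff hp).1 hchar⟩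
  · rintro ⟨g, hg, hp, hchar⟩
    exact ⟨_, hp, (O.ringChar_residueField_eq_iff hp).2 hchar,
      ((inertiaSubgroup K O).prime_dvd_natCard_iff_exists_orderOf_eq hp).2 ⟨g, hg, rfl⟩⟩

theorem tame_locus_isOpen_general {K L : Type u} [Field K] [Field L] [Algebra K L]
    [FiniteDimensional K L] :
    @IsOpen (ValuationSubring L) (zariskiTopology L)
      {O : ValuationSubring L |
        ∀ p : ℕ, p.Prime → ringChar (IsLocalRing.ResidueField O) = p →
          ¬ p ∣ Nat.card (inertiaSet K O)} := by
  have wild_eq : {O : ValuationSubring L | ∀ p : ℕ, p.Prime →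
      ringChar (IsLocalRing.ResidueField O) = p → ¬ p ∣ Nat.card (inertiaSet K O)}ᶜ =
      ⋃ (g : L ≃ₐ[K] L) (_ : (orderOf g).Prime),
        {O | g ∈ inertiaSet K O} ∩ {O | (orderOf g : L) ∈ O.nonunits} := by
    ext O
    simpa [and_left_comm] using exists_prime_dvd_card_inertiaSet_iff
  rw [← isClosed_compl_iff, wild_eq]
  exact isClosed_iUnion_of_finite fun g => isClosed_iUnion_of_finite fun _ =>
    (isClosed_setOf_mem_inertiaSet g).inter (ValuationSubring.isClosed_setOf_mem_nonunits _)

/-- let `L/K` be a finite Galois extension of fields. Then the tame locus,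
namely the set of all `O ∈ Val(L)` such that either the residue field `κ(O)` has
characteristic `0`, or `char κ(O) = p > 0` and `p` does not divide the order of the
inertia subgroup `I_O ≤ Gal(L/K)`, is open in `Val(L)` for the Zariski topology. -/
theorem tame_locus_isOpen {K L : Type u} [Field K] [Field L] [Algebra K L]
    [FiniteDimensional K L] [IsGalois K L] :
    @IsOpen (ValuationSubring L) (zariskiTopology L)
      {O : ValuationSubring L |
        ∀ p : ℕ, p.Prime → ringChar (IsLocalRing.ResidueField O) = p →
          ¬ p ∣ Nat.card (inertiaSet K O)} :=
  tame_locus_isOpen_general
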